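/- arXiv:math/0505439 — 4 statements merged into one kernel-verified Lean document; each statement's English description precedes it below -/
import Mathlib

section
/- For every λ > 0, ∫₀^∞ e^{−x} ∏_{i=1}^∞ (1 − e^{−x−λi})² dx < ((1 − e^{−λ})/(2e^{−λ})) · (1 − exp(−2e^{−λ}/(1 − e^{−λ}))). -/
/-!
With `q = e^{-λ}`, the factors are `1 - a_i` with `a_i = e^{-x} q^{i+1}`, and `log (1 - a) < -a`
gives `∏ (1 - a_i)² < exp (-2 ∑ a_i) = exp (-c e^{-x})` where `c = 2q/(1-q)`.
The majorant `e^{-x} exp (-c e^{-x})` has the antiderivative `exp (-c e^{-x}) / c`, so its integral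
over `(0, ∞)` is `(1 - e^{-c}) / c`, which is the right-hand side.
-/

open Real MeasureTheory Set Filter Topology

lemma tprod_one_sub_lt_exp_neg_tsum {ι : Type*} {a : ι → ℝ} (hs : Summable a)
    (ha : ∀ i, a i < 1) {j : ι} (hj : a j ≠ 0) :
    ∏' i, (1 - a i) < exp (-∑' i, a i) := by
  have hlog : Summable fun i ↦ log (1 - a i) := by
    simpa only [sub_eq_add_neg] using Real.summable_log_one_add_of_summable hs.neg
  rw [← rexp_tsum_eq_tprod (fun i ↦ sub_pos.2 (ha i)) hlog, exp_lt_exp, ← tsum_neg]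
  refine hlog.tsum_lt_tsum (i := j) (fun i ↦ ?_) ?_ hs.neg
  · linarith [log_le_sub_one_of_pos (sub_pos.2 (ha i))]
  · linarith [log_lt_sub_one_of_pos (sub_pos.2 (ha j)) (by simpa using hj)]

lemma tprod_one_sub_pow_lt_exp_neg_mul_tsum {ι : Type*} {a : ι → ℝ} (hs : Summable a)
    (ha : ∀ i, a i < 1) {j : ι} (hj : a j ≠ 0) {n : ℕ} (hn : n ≠ 0) :
    ∏' i, (1 - a i) ^ n < exp (-(n * ∑' i, a i)) := by
  have hmul : Multipliable fun i ↦ 1 - a i := by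
    simpa only [sub_eq_add_neg] using Real.multipliable_one_add_of_summable hs.neg
  rw [hmul.tprod_pow, neg_mul_eq_mul_neg, exp_nat_mul]
  exact pow_lt_pow_left₀ (tprod_one_sub_lt_exp_neg_tsum hs ha hj)
    (tprod_nonneg fun i ↦ (sub_pos.2 (ha i)).le) hn

lemma hasSum_exp_neg_sub_mul_succ {l : ℝ} (hl : 0 < l) (x : ℝ) :
    HasSum (fun i : ℕ ↦ exp (-x - l * (i + 1))) (exp (-x) * (exp (-l) / (1 - exp (-l)))) := by
  have hq : exp (-l) < 1 := exp_lt_one_iff.2 (neg_neg_of_pos hl)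
  have hterm : (fun i : ℕ ↦ exp (-x - l * (i + 1))) =
      fun i ↦ exp (-x) * exp (-l) * exp (-l) ^ i := by
    ext i
    rw [← exp_nat_mul, ← exp_add, ← exp_add]
    ring_nf
  rw [hterm, div_eq_mul_inv, ← mul_assoc]
  exact (hasSum_geometric_of_lt_one (exp_pos (-l)).le hq).mul_left (exp (-x) * exp (-l))

lemma hasDerivAt_exp_neg_mul_exp_neg_div {c : ℝ} (hc : c ≠ 0) (x : ℝ) :
    HasDerivAt (fun y ↦ exp (-c * exp (-y)) / c) (exp (-x) * exp (-c * exp (-x))) x :=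
  (((hasDerivAt_neg x).exp.const_mul (-c)).exp.div_const c).congr_deriv (by field_simp)

lemma tendsto_exp_neg_mul_exp_neg_div (c : ℝ) :
    Tendsto (fun y ↦ exp (-c * exp (-y)) / c) atTop (𝓝 (1 / c)) := by
  simpa using ((tendsto_exp_neg_atTop_nhds_zero.const_mul (-c)).rexp).div_const c

lemma integrableOn_exp_neg_mul_exp_neg_mul_exp_neg {c : ℝ} (hc : c ≠ 0) :
    IntegrableOn (fun x ↦ exp (-x) * exp (-c * exp (-x))) (Ioi 0) :=
  integrableOn_Ioi_deriv_of_nonneg' (fun x _ ↦ hasDerivAt_exp_neg_mul_exp_neg_div hc x)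
    (fun x _ ↦ by positivity) (tendsto_exp_neg_mul_exp_neg_div c)

lemma integral_exp_neg_mul_exp_neg_mul_exp_neg {c : ℝ} (hc : c ≠ 0) :
    ∫ x in Ioi 0, exp (-x) * exp (-c * exp (-x)) = (1 - exp (-c)) / c := by
  rw [integral_Ioi_of_hasDerivAt_of_nonneg' (fun x _ ↦ hasDerivAt_exp_neg_mul_exp_neg_div hc x)
    (fun x _ ↦ by positivity) (tendsto_exp_neg_mul_exp_neg_div c)]
  simp [sub_div]

lemma setIntegral_lt_setIntegral_of_nonneg_of_lt {α : Type*} [MeasurableSpace α]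
    {μ : Measure α} {s : Set α} {f g : α → ℝ} (hs : MeasurableSet s) (hμs : μ s ≠ 0)
    (hg : IntegrableOn g s μ)
    (hf : ∀ x ∈ s, 0 ≤ f x) (hfg : ∀ x ∈ s, f x < g x) :
    ∫ x in s, f x ∂μ < ∫ x in s, g x ∂μ := by
  have of_integrable : ∀ f : α → ℝ, IntegrableOn f s μ → (∀ x ∈ s, f x < g x) →
      ∫ x in s, f x ∂μ < ∫ x in s, g x ∂μ := by
    intro f hfi hfg
    have hsupp : Function.support (g - f) ∩ s = s :=
      inter_eq_right.2 fun x hx ↦ (sub_pos.2 (hfg x hx)).ne'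
    have hpos : 0 < ∫ x in s, (g - f) x ∂μ := by
      rw [setIntegral_pos_iff_support_of_nonneg_ae _ (hg.sub hfi), hsupp]
      · exact pos_iff_ne_zero.2 hμs
      · exact ae_restrict_of_forall_mem hs fun x hx ↦ (sub_pos.2 (hfg x hx)).le
    rw [Pi.sub_def, integral_sub hg hfi] at hpos
    linarith
  -- otherwise `∫ f` is the junk value `0`, and `0 ≤ f < g` still beats it
  by_cases hfi : IntegrableOn f s μ
  · exact of_integrable f hfi hfg
  · rw [integral_undef hfi, ← integral_zero α ℝ (μ := μ.restrict s)]
    exact of_integrable 0 integrableOn_zero fun x hx ↦ (hf x hx).trans_lt (hfg x hx)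

/-- Upper bound for the integral `∫₀^∞ e^{-x} ∏_{i=1}^∞ (1 - e^{-x-λi})² dx`. -/
theorem integral_prod_upper_bound (l : ℝ) (hl : 0 < l) :
    (∫ x in Set.Ioi (0 : ℝ),
        Real.exp (-x) * ∏' i : ℕ, (1 - Real.exp (-x - l * ((i : ℝ) + 1))) ^ 2)
      < (1 - Real.exp (-l)) / (2 * Real.exp (-l)) *
          (1 - Real.exp (-2 * Real.exp (-l) / (1 - Real.exp (-l)))) := by
  set q := exp (-l)
  have hq : q < 1 := exp_lt_one_iff.2 (neg_neg_of_pos hl)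
  set c := 2 * (q / (1 - q))
  have hc : c ≠ 0 := (mul_pos two_pos (div_pos (exp_pos _) (sub_pos.2 hq))).ne'
  have hprod : ∀ x ∈ Ioi (0 : ℝ), exp (-x) * ∏' i : ℕ, (1 - exp (-x - l * ((i : ℝ) + 1))) ^ 2
      < exp (-x) * exp (-c * exp (-x)) := by
    intro x hx
    have hsum := hasSum_exp_neg_sub_mul_succ hl x
    refine mul_lt_mul_of_pos_left ?_ (exp_pos _)
    refine (tprod_one_sub_pow_lt_exp_neg_mul_tsum hsum.summable
      (fun i ↦ exp_lt_one_iff.2 ?_) (j := 0) (exp_pos _).ne' two_ne_zero).trans_eq ?_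
    · nlinarith [mem_Ioi.1 hx, (i.cast_nonneg : (0 : ℝ) ≤ i)]
    · rw [hsum.tsum_eq]
      congr 1
      push_cast
      ring
  calc _ < ∫ x in Ioi 0, exp (-x) * exp (-c * exp (-x)) :=
        setIntegral_lt_setIntegral_of_nonneg_of_lt measurableSet_Ioi
          (isOpen_Ioi.measure_pos volume nonempty_Ioi).ne'
          (integrableOn_exp_neg_mul_exp_neg_mul_exp_neg hc)
          (fun x _ ↦ mul_nonneg (exp_pos _).le (tprod_nonneg fun i ↦ sq_nonneg _)) hprod
    _ = _ := by
      have hq0 : q ≠ 0 := (exp_pos _).ne'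
      have hq1 : 1 - q ≠ 0 := (sub_pos.2 hq).ne'
      rw [integral_exp_neg_mul_exp_neg_mul_exp_neg hc, show -2 * q / (1 - q) = -c by ring]
      field_simp
      simp only [c]
      field_simp
end

section
/- Let (h_i)_{i∈ℤ} be i.i.d. exponential of mean 1 and W(x) = λ x². There exists a > 0 such that for all 0 < λ < 1/4, P(0 ∈ B) > a·λ/ln(λ^{−1}), where B = {i ∈ ℤ : h_i ≥ W(j,h_j,k,h_k;i) for all j < i < k}. -/
open MeasureTheory ProbabilityTheory Real
open scoped ENNReal

/-!
On the event that `h 0 ≥ c := log λ⁻¹` while `h i ≤ c + λ i²` for every `i ≠ 0`, the points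
`(j, h j)` and `(k, h k)` lie under the parabola `c + λ x²`, and a parabola of the same leading
coefficient through two points under it stays under it in between; at `0` it is therefore at most
`c ≤ h 0`, so `0 ∈ B`. By independence this event has probability at least
`λ ∏_{i ≠ 0} (1 - λ e^{-λ i²}) ≥ λ exp (-2 λ ∑_{i ≠ 0} e^{-λ i²}) ≥ e⁻⁴ λ`, using `i² ≥ |i|` and
summing a geometric series. Since `log λ⁻¹ > 1` for `λ < 1/4`, this beats `e⁻⁴ λ / log λ⁻¹`.
-/

/-- The paper's `W(j, a, k, b; x)`. -/
noncomputable def parabolaThrough (l j a k b x : ℝ) : ℝ :=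
  l * (x - j) * (x - k) + (k - x) / (k - j) * a + (x - j) / (k - j) * b

theorem parabolaThrough_le {l c j k a b x : ℝ} (hjx : j < x) (hxk : x < k)
    (ha : a ≤ c + l * j ^ 2) (hb : b ≤ c + l * k ^ 2) :
    parabolaThrough l j a k b x ≤ c + l * x ^ 2 := by
  have hkj : k - j ≠ 0 := by linarith
  have hx : 0 ≤ (k - x) / (k - j) := div_nonneg (by linarith) (by linarith)
  have hx' : 0 ≤ (x - j) / (k - j) := div_nonneg (by linarith) (by linarith)
  calc parabolaThrough l j a k b x
      ≤ parabolaThrough l j (c + l * j ^ 2) k (c + l * k ^ 2) x := by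
        unfold parabolaThrough; gcongr
    _ = c + l * x ^ 2 := by unfold parabolaThrough; field_simp; ring

def peakConstraint (c l : ℝ) (i : ℤ) : Set ℝ :=
  if i = 0 then Set.Ici c else Set.Iic (c + l * i ^ 2)

theorem measurableSet_peakConstraint (c l : ℝ) (i : ℤ) :
    MeasurableSet (peakConstraint c l i) := by
  by_cases hi : i = 0 <;> simp [peakConstraint, hi]

theorem parabolaThrough_zero_le_of_mem_peakConstraint {c l : ℝ} {f : ℤ → ℝ}
    (hf : ∀ i, f i ∈ peakConstraint c l i) {j k : ℤ} (hj : j < 0) (hk : 0 < k) :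
    parabolaThrough l j (f j) k (f k) 0 ≤ f 0 := by
  have h0 := hf 0
  have hj' := hf j
  have hk' := hf k
  simp only [peakConstraint, hj.ne, hk.ne', if_true, if_false, Set.mem_Ici, Set.mem_Iic]
    at h0 hj' hk'
  calc parabolaThrough l j (f j) k (f k) 0 ≤ c + l * 0 ^ 2 :=
        parabolaThrough_le (by exact_mod_cast hj) (by exact_mod_cast hk) hj' hk'
    _ ≤ f 0 := by simpa using h0

theorem sum_pow_natAbs_le {r : ℝ} (hr0 : 0 ≤ r) (hr1 : r < 1) {t : Finset ℤ} (ht : 0 ∉ t) :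
    ∑ i ∈ t, r ^ i.natAbs ≤ 2 * r / (1 - r) := by
  have hneg : HasSum (fun n : ℕ => r ^ (-((n : ℤ) + 1)).natAbs) (r * (1 - r)⁻¹) := by
    simp_rw [show ∀ n : ℕ, (-((n : ℤ) + 1)).natAbs = n + 1 from fun n => by omega, pow_succ']
    exact (hasSum_geometric_of_lt_one hr0 hr1).mul_left r
  have hsum : HasSum (fun i : ℤ => r ^ i.natAbs) ((1 - r)⁻¹ + r * (1 - r)⁻¹) :=
    .of_nat_of_neg_add_one (by simpa using hasSum_geometric_of_lt_one hr0 hr1) hneg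
  have hle := sum_le_hasSum (insert 0 t) (fun i _ => by positivity) hsum
  rw [Finset.sum_insert ht, Int.natAbs_zero, pow_zero] at hle
  have : (1 - r)⁻¹ + r * (1 - r)⁻¹ = 1 + 2 * r / (1 - r) := by
    field_simp [(by linarith : 1 - r ≠ 0)]; ring
  linarith

theorem mul_sum_exp_neg_mul_sq_le {l : ℝ} (hl : 0 < l) {t : Finset ℤ} (ht : 0 ∉ t) :
    l * ∑ i ∈ t, exp (-(l * i ^ 2)) ≤ 2 := by
  have hterm (i : ℤ) : exp (-(l * i ^ 2)) ≤ exp (-l) ^ i.natAbs := by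
    rw [← exp_nat_mul]
    have : (i.natAbs : ℝ) ≤ (i : ℝ) ^ 2 := by
      rw [Nat.cast_natAbs]; exact_mod_cast Int.natAbs_le_self_sq i
    gcongr; nlinarith
  have hr : exp (-l) * (1 + l) ≤ 1 := by
    rw [exp_neg, inv_mul_le_iff₀ (exp_pos l)]; linarith [add_one_le_exp l]
  calc l * ∑ i ∈ t, exp (-(l * i ^ 2)) ≤ l * (2 * exp (-l) / (1 - exp (-l))) := by
        gcongr
        exact (Finset.sum_le_sum fun i _ => hterm i).trans
          (sum_pow_natAbs_le (exp_pos _).le (exp_lt_one_iff.mpr (by linarith)) ht)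
    _ ≤ 2 := by
        rw [mul_div_assoc', div_le_iff₀ (by linarith [exp_lt_one_iff.mpr (neg_lt_zero.mpr hl)])]
        nlinarith

theorem exp_neg_two_mul_le_one_sub {x : ℝ} (hx0 : 0 ≤ x) (hx1 : x ≤ 1 / 2) :
    exp (-(2 * x)) ≤ 1 - x := by
  have h : (1 + x) ^ 2 ≤ exp (2 * x) := by
    rw [show 2 * x = x + x by ring, exp_add, sq]
    have := add_one_le_exp x
    gcongr <;> linarith
  rw [exp_neg, inv_le_iff_one_le_mul₀ (exp_pos _)]
  nlinarith [mul_le_mul_of_nonneg_left h (by linarith : (0 : ℝ) ≤ 1 - x),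
    mul_nonneg hx0 (by nlinarith : (0 : ℝ) ≤ 1 - x - x ^ 2)]

theorem exp_neg_four_le_prod_one_sub {l : ℝ} (hl : 0 < l) (hl2 : l ≤ 1 / 2) {t : Finset ℤ}
    (ht : 0 ∉ t) : exp (-4) ≤ ∏ i ∈ t, (1 - l * exp (-(l * i ^ 2))) := by
  calc exp (-4) ≤ exp (-(2 * (l * ∑ i ∈ t, exp (-(l * i ^ 2))))) := by
        gcongr; linarith [mul_sum_exp_neg_mul_sq_le hl ht]
    _ = ∏ i ∈ t, exp (-(2 * (l * exp (-(l * i ^ 2))))) := by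
        rw [← exp_sum]; congr 1; simp [Finset.mul_sum]
    _ ≤ ∏ i ∈ t, (1 - l * exp (-(l * i ^ 2))) := by
        gcongr with i
        refine exp_neg_two_mul_le_one_sub (by positivity) ?_
        have : exp (-(l * i ^ 2)) ≤ 1 := exp_le_one_iff.mpr (by nlinarith)
        nlinarith

theorem Finset.mul_prod_erase_le_prod {ι M : Type*} [DecidableEq ι] [CommMonoid M] [Preorder M]
    [MulRightMono M] (s : Finset ι) (f : ι → M) {a : ι} (ha : f a ≤ 1) :
    f a * ∏ i ∈ s.erase a, f i ≤ ∏ i ∈ s, f i := by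
  by_cases h : a ∈ s
  · exact (Finset.mul_prod_erase s f h).le
  · rw [Finset.erase_eq_of_notMem h]
    exact mul_le_of_le_one_left' ha

theorem ofReal_mul_exp_neg_four_le_prod {l : ℝ} (hl : 0 < l) (hl2 : l ≤ 1 / 2)
    {p : ℤ → ℝ≥0∞} (hp0 : ENNReal.ofReal l ≤ p 0) (hp0_le : p 0 ≤ 1)
    (hp : ∀ i : ℤ, i ≠ 0 → ENNReal.ofReal (1 - l * exp (-(l * i ^ 2))) ≤ p i)
    (s : Finset ℤ) :
    ENNReal.ofReal (l * exp (-4)) ≤ ∏ i ∈ s, p i := by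
  have hfactor (i : ℤ) : 0 ≤ 1 - l * exp (-(l * i ^ 2)) := by
    have : exp (-(l * i ^ 2)) ≤ 1 := exp_le_one_iff.mpr (by nlinarith)
    nlinarith
  calc ENNReal.ofReal (l * exp (-4))
      ≤ ENNReal.ofReal l *
          ENNReal.ofReal (∏ i ∈ s.erase 0, (1 - l * exp (-(l * i ^ 2)))) := by
        rw [← ENNReal.ofReal_mul hl.le]
        gcongr
        exact exp_neg_four_le_prod_one_sub hl hl2 (Finset.notMem_erase 0 s)
    _ = ENNReal.ofReal l * ∏ i ∈ s.erase 0, ENNReal.ofReal (1 - l * exp (-(l * i ^ 2))) := by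
        rw [ENNReal.ofReal_prod_of_nonneg fun i _ => hfactor i]
    _ ≤ p 0 * ∏ i ∈ s.erase 0, p i := by
        gcongr with i hi
        exact hp i (Finset.ne_of_mem_erase hi)
    _ ≤ ∏ i ∈ s, p i := s.mul_prod_erase_le_prod p hp0_le

theorem ProbabilityTheory.iIndepFun.measure_iInter_preimage_eq_iInf {ι Ω β : Type*}
    [Countable ι] [MeasurableSpace Ω] [MeasurableSpace β] {P : Measure Ω} [IsFiniteMeasure P]
    {X : ι → Ω → β} (hX : iIndepFun X P) (hmeas : ∀ i, Measurable (X i)) {C : ι → Set β}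
    (hC : ∀ i, MeasurableSet (C i)) :
    P (⋂ i, X i ⁻¹' C i) = ⨅ s : Finset ι, ∏ i ∈ s, P (X i ⁻¹' C i) := by
  have hiInter : ⋂ i, X i ⁻¹' C i = ⋂ s : Finset ι, ⋂ i ∈ s, X i ⁻¹' C i := by
    ext ω
    simp only [Set.mem_iInter]
    exact ⟨fun h s i _ => h i, fun h i => h {i} i (Finset.mem_singleton_self i)⟩
  have hanti : Antitone fun s : Finset ι => ⋂ i ∈ s, X i ⁻¹' C i :=
    fun s t hst => Set.biInter_subset_biInter_left hst
  rw [hiInter, hanti.measure_iInter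
    (fun s => (MeasurableSet.biInter s.countable_toSet fun i _ => hmeas i (hC i)).nullMeasurableSet)
    ⟨∅, measure_ne_top _ _⟩]
  exact iInf_congr fun s => hX.meas_biInter fun i _ => ⟨C i, hC i, rfl⟩

/-- Lower bound on `P(0 ∈ B)` for the parabola `W(x) = λx²`: there is `a > 0`
such that for all `0 < λ < 1/4`, `P(0 ∈ B) > a λ / ln(λ⁻¹)`. -/
theorem prob_zero_in_B_parabola_lower
    {Ω : Type*} [MeasurableSpace Ω] (P : Measure Ω) [IsProbabilityMeasure P]
    (h : ℤ → Ω → ℝ) (hmeas : ∀ i, Measurable (h i))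
    (hindep : iIndepFun h P)
    (hexp : ∀ i t, 0 ≤ t → P {ω | t < h i ω} = ENNReal.ofReal (Real.exp (-t))) :
    ∃ a : ℝ, 0 < a ∧ ∀ l : ℝ, 0 < l → l < 1 / 4 →
      ENNReal.ofReal (a * l / Real.log l⁻¹)
        < P {ω | ∀ j k : ℤ, j < 0 → 0 < k →
            l * ((0 : ℝ) - j) * ((0 : ℝ) - k)
              + (((k : ℝ) - 0) / ((k : ℝ) - j)) * h j ω
              + (((0 : ℝ) - j) / ((k : ℝ) - j)) * h k ω ≤ h 0 ω} := by
  refine ⟨exp (-4), exp_pos _, fun l hl hl4 => ?_⟩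
  set c := log l⁻¹ with hc_def
  have hlc : exp (-c) = l := by rw [hc_def, log_inv, neg_neg, exp_log hl]
  have hc1 : 1 < c := by
    rw [hc_def, lt_log_iff_exp_lt (by positivity)]
    have : (4 : ℝ) < l⁻¹ := by rw [lt_inv_comm₀ four_pos hl]; linarith
    linarith [exp_one_lt_d9]
  let C := peakConstraint c l
  have hP0 : ENNReal.ofReal l ≤ P (h 0 ⁻¹' C 0) := by
    rw [← hlc, ← hexp 0 c (by linarith)]
    exact measure_mono fun ω hω => le_of_lt (α := ℝ) hω
  have hP (i : ℤ) (hi : i ≠ 0) :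
      ENNReal.ofReal (1 - l * exp (-(l * i ^ 2))) ≤ P (h i ⁻¹' C i) := by
    have : h i ⁻¹' C i = {ω | c + l * i ^ 2 < h i ω}ᶜ := by ext; simp [C, peakConstraint, hi]
    rw [this, prob_compl_eq_one_sub (measurableSet_lt measurable_const (hmeas i)),
      hexp i _ (by positivity), neg_add, exp_add, hlc, ENNReal.ofReal_sub _ (by positivity),
      ENNReal.ofReal_one]
  calc ENNReal.ofReal (exp (-4) * l / log l⁻¹) < ENNReal.ofReal (l * exp (-4)) := by
        rw [ENNReal.ofReal_lt_ofReal_iff (by positivity), div_lt_iff₀ (by linarith)]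
        nlinarith [mul_pos hl (exp_pos (-4))]
    _ ≤ P (⋂ i, h i ⁻¹' C i) := by
        rw [hindep.measure_iInter_preimage_eq_iInf hmeas (measurableSet_peakConstraint c l)]
        exact le_iInf (ofReal_mul_exp_neg_four_le_prod hl (by linarith) hP0 prob_le_one hP)
    _ ≤ _ := by
        refine measure_mono fun ω hω j k hj hk => ?_
        exact parabolaThrough_zero_le_of_mem_peakConstraint (f := (h · ω))
          (Set.mem_iInter.mp hω) hj hk
end

section
/- Let W : ℝ → ℝ be continuous, even, strictly convex with W(0)=0, and (h_i)_{i∈ℤ} real heights such that all suprema below are finite and attained. Suppose a countable ordered set {b_n}_{n∈ℤ} ⊂ ℤ satisfies: (5.1) h_i < W(b_n,h_{b_n},b_{n+1},h_{b_{n+1}};i) for all b_n < i < b_{n+1}, and (5.2) h_{b_n} ≥ W(b_{n−1},h_{b_{n−1}},b_{n+1},h_{b_{n+1}};b_n) for all n. Then h_{b_n} ≥ W(b_{n−p},h_{b_{n−p}},b_{n+q},h_{b_{n+q}};b_n) for all n ∈ ℤ and all integers p, q ≥ 1, where W(j,h_j,k,h_k;·) denotes the unique translate of W through (j,h_j) and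 (k,h_k). -/
/-- A translate of `W`: some `a + W (x - c)`. -/
private def Tr (W F : ℝ → ℝ) : Prop := ∃ c a : ℝ, ∀ x, F x = a + W (x - c)

private lemma slope_strict {W : ℝ → ℝ} (hconv : StrictConvexOn ℝ Set.univ W)
    {u v δ : ℝ} (huv : u < v) (hδ : 0 < δ) :
    W (u + δ) + W v < W u + W (v + δ) := by
  set L := v + δ - u with hL
  have hLpos : 0 < L := by simp only [hL]; linarith
  have ht : 0 < (v - u) / L := div_pos (by linarith) hLpos
  have hs : 0 < δ / L := div_pos hδ hLpos
  have hts : (v - u) / L + δ / L = 1 := by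
    field_simp
    rw [hL]; ring
  have hne : u ≠ v + δ := by intro e; linarith
  have h1 := hconv.2 (Set.mem_univ u) (Set.mem_univ (v + δ)) hne ht hs hts
  have h2 := hconv.2 (Set.mem_univ u) (Set.mem_univ (v + δ)) hne hs ht
    (by linarith [hts])
  have e1 : ((v - u) / L) • u + (δ / L) • (v + δ) = u + δ := by
    simp only [smul_eq_mul]; field_simp; ring
  have e2 : (δ / L) • u + ((v - u) / L) • (v + δ) = v := by
    simp only [smul_eq_mul]; field_simp; ring
  rw [e1] at h1
  rw [e2] at h2
  simp only [smul_eq_mul] at h1 h2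
  have key : (v - u) / L * W u + δ / L * W (v + δ) +
      (δ / L * W u + (v - u) / L * W (v + δ)) =
      ((v - u) / L + δ / L) * (W u + W (v + δ)) := by ring
  rw [hts, one_mul] at key
  linarith

private lemma diff_trichotomy {W : ℝ → ℝ} (hconv : StrictConvexOn ℝ Set.univ W)
    {F G : ℝ → ℝ} (hF : Tr W F) (hG : Tr W G) :
    (∀ x y : ℝ, F x - G x = F y - G y) ∨
      StrictMono (fun x => F x - G x) ∨ StrictAnti (fun x => F x - G x) := by
  obtain ⟨c1, a1, hF⟩ := hF
  obtain ⟨c2, a2, hG⟩ := hG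
  rcases lt_trichotomy c1 c2 with hc | hc | hc
  · right; left
    intro x y hxy
    have hδ : 0 < c2 - c1 := by linarith
    have key := slope_strict hconv (show x - c2 < y - c2 by linarith) hδ
    have e1 : x - c2 + (c2 - c1) = x - c1 := by ring
    have e2 : y - c2 + (c2 - c1) = y - c1 := by ring
    rw [e1, e2] at key
    simp only [hF, hG]
    linarith
  · left
    intro x y
    simp only [hF, hG, hc]
    ring
  · right; right
    intro x y hxy
    have hδ : 0 < c1 - c2 := by linarith
    have key := slope_strict hconv (show x - c1 < y - c1 by linarith) hδ
    have e1 : x - c1 + (c1 - c2) = x - c2 := by ring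
    have e2 : y - c1 + (c1 - c2) = y - c2 := by ring
    rw [e1, e2] at key
    simp only [hF, hG]
    linarith

private lemma eq_of_agree_two {W : ℝ → ℝ} (hconv : StrictConvexOn ℝ Set.univ W)
    {F G : ℝ → ℝ} (hF : Tr W F) (hG : Tr W G)
    {x y : ℝ} (hxy : x ≠ y) (h1 : F x = G x) (h2 : F y = G y) :
    ∀ z, F z = G z := by
  rcases diff_trichotomy hconv hF hG with hc | hm | ha
  · intro z
    have := hc z x
    rw [h1] at this
    linarith [this]
  · exact absurd (hm.injective (show F x - G x = F y - G y by rw [h1, h2]; ring)) hxy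
  · exact absurd (ha.injective (show F x - G x = F y - G y by rw [h1, h2]; ring)) hxy

private lemma main_step {W : ℝ → ℝ} (hconv : StrictConvexOn ℝ Set.univ W)
    {f k g : ℝ → ℝ} (hf : Tr W f) (hk : Tr W k) (hg : Tr W g)
    {x1 x2 x3 x4 v1 v2 v3 v4 : ℝ}
    (h12 : x1 < x2) (h23 : x2 < x3) (h34 : x3 < x4)
    (hf1 : f x1 = v1) (hf3 : f x3 = v3) (hf2 : f x2 ≤ v2)
    (hk2 : k x2 = v2) (hk4 : k x4 = v4) (hk3 : k x3 ≤ v3)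
    (hg1 : g x1 = v1) (hg4 : g x4 = v4) :
    g x2 ≤ v2 ∧ g x3 ≤ v3 := by
  by_cases hfk : ∀ z, f z = k z
  · have hf4 : f x4 = v4 := by rw [hfk]; exact hk4
    have hgf : ∀ z, g z = f z :=
      eq_of_agree_two hconv hg hf (ne_of_lt (show x1 < x4 by linarith))
        (by rw [hg1, hf1]) (by rw [hg4, hf4])
    have hf2' : f x2 = v2 := by rw [hfk]; exact hk2
    exact ⟨by rw [hgf x2, hf2'], by rw [hgf x3, hf3]⟩
  · have hD2 : f x2 - k x2 ≤ 0 := by rw [hk2]; linarith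
    have hD3 : 0 ≤ f x3 - k x3 := by rw [hf3]; linarith
    rcases diff_trichotomy hconv hf hk with hc | hm | ha
    · exfalso
      apply hfk
      intro z
      have e23 := hc x2 x3
      have ez := hc z x2
      have : f x2 - k x2 = 0 := by linarith
      linarith [this, ez]
    · -- strictly increasing difference
      have hD1 : f x1 - k x1 < f x2 - k x2 := hm h12
      have hD4 : f x3 - k x3 < f x4 - k x4 := hm h34
      have hk1 : v1 < k x1 := by rw [← hf1]; linarith
      have hf4 : v4 < f x4 := by rw [← hk4]; linarith
      constructor
      · -- compare g and k
        rcases diff_trichotomy hconv hg hk with hc' | hm' | ha'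
        · exfalso
          have := hc' x1 x4
          rw [hg1, hg4, hk4] at this
          linarith
        · have h1 := hm' (show x2 < x4 by linarith)
          dsimp only at h1
          rw [hk2, hg4, hk4] at h1
          linarith
        · exfalso
          have := ha' (show x1 < x4 by linarith)
          dsimp only at this
          rw [hg1, hg4, hk4] at this
          linarith
      · -- compare g and f
        rcases diff_trichotomy hconv hg hf with hc' | hm' | ha'
        · exfalso
          have := hc' x1 x4
          rw [hg1, hf1, hg4] at this
          linarith
        · exfalso
          have := hm' (show x1 < x4 by linarith)
          dsimp only at this
          rw [hg1, hf1, hg4] at this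
          linarith
        · have h1 := ha' (show x1 < x3 by linarith)
          dsimp only at h1
          rw [hg1, hf1, hf3] at h1
          linarith
    · exfalso
      have := ha h23
      dsimp only at this
      linarith


/-- Nearest-neighbour necklace conditions (5.1)-(5.2) imply the long-range
conditions (5.2'): `h_{b_n} ≥ W(b_{n-p}, h_{b_{n-p}}, b_{n+q}, h_{b_{n+q}}; b_n)`
for all `p, q ≥ 1`.  Here `Wc j a k b : ℝ → ℝ` denotes the unique translate of
the strictly convex even shape `W` passing through `(j, a)` and `(k, b)`. -/
theorem necklace_nearest_implies_all
    (W : ℝ → ℝ) (hcont : Continuous W) (heven : ∀ x, W (-x) = W x)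
    (hconv : StrictConvexOn ℝ Set.univ W) (hW0 : W 0 = 0)
    (Wc : ℝ → ℝ → ℝ → ℝ → ℝ → ℝ)
    (hWc : ∀ j a k b : ℝ, j < k →
      (∃ xs hs : ℝ, ∀ x, Wc j a k b x = hs + W (x - xs)) ∧
        Wc j a k b j = a ∧ Wc j a k b k = b)
    (b : ℤ → ℤ) (hb : StrictMono b) (h : ℤ → ℝ)
    (h51 : ∀ n : ℤ, ∀ i : ℤ, b n < i → i < b (n + 1) →
      h i < Wc (b n) (h (b n)) (b (n + 1)) (h (b (n + 1))) i)
    (h52 : ∀ n : ℤ,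
      Wc (b (n - 1)) (h (b (n - 1))) (b (n + 1)) (h (b (n + 1))) (b n) ≤ h (b n)) :
    ∀ n p q : ℤ, 1 ≤ p → 1 ≤ q →
      Wc (b (n - p)) (h (b (n - p))) (b (n + q)) (h (b (n + q))) (b n) ≤ h (b n) := by
  -- cast helper: b is strictly monotone as a real-valued map
  have hbR : ∀ {i j : ℤ}, i < j → ((b i : ℝ) < (b j : ℝ)) := fun hij => by
    exact_mod_cast hb hij
  have key : ∀ m : ℕ, ∀ n p q : ℤ, 1 ≤ p → 1 ≤ q → p + q = (m : ℤ) + 2 →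
      Wc (b (n - p)) (h (b (n - p))) (b (n + q)) (h (b (n + q))) (b n) ≤ h (b n) := by
    intro m
    induction m using Nat.strong_induction_on with
    | _ m IH =>
      intro n p q hp hq hpq
      by_cases hq2 : 2 ≤ q
      · -- extend on the right
        have hm1 : 1 ≤ m := by omega
        have IH1 := IH (m - 1) (by omega) n p (q - 1) hp (by omega) (by omega)
        have IH2 := IH (q - 2).toNat (by omega) (n + q - 1) (q - 1) 1 (by omega)
          le_rfl (by omega)
        rw [show n + (q - 1) = n + q - 1 from by ring] at IH1
        rw [show n + q - 1 - (q - 1) = n from by ring,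
            show n + q - 1 + 1 = n + q from by ring] at IH2
        -- points
        have o12 : (b (n - p) : ℝ) < (b n : ℝ) := hbR (by omega)
        have o23 : (b n : ℝ) < (b (n + q - 1) : ℝ) := hbR (by omega)
        have o34 : (b (n + q - 1) : ℝ) < (b (n + q) : ℝ) := hbR (by omega)
        obtain ⟨hfT, hf1, hf3⟩ := hWc (b (n - p)) (h (b (n - p)))
          (b (n + q - 1)) (h (b (n + q - 1))) (by linarith)
        obtain ⟨hkT, hk2, hk4⟩ := hWc (b n) (h (b n))
          (b (n + q)) (h (b (n + q))) (by linarith)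
        obtain ⟨hgT, hg1, hg4⟩ := hWc (b (n - p)) (h (b (n - p)))
          (b (n + q)) (h (b (n + q))) (by linarith)
        exact (main_step hconv hfT hkT hgT o12 o23 o34 hf1 hf3 IH1 hk2 hk4 IH2
          hg1 hg4).1
      · -- q = 1
        have hq1 : q = 1 := by omega
        subst hq1
        by_cases hp2 : 2 ≤ p
        · -- extend on the left
          have hm1 : 1 ≤ m := by omega
          have IH1 := IH (p - 2).toNat (by omega) (n - p + 1) 1 (p - 1) le_rfl
            (by omega) (by omega)
          have IH2 := IH (m - 1) (by omega) n (p - 1) 1 (by omega) le_rfl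
            (by omega)
          rw [show n - p + 1 - 1 = n - p from by ring,
              show n - p + 1 + (p - 1) = n from by ring] at IH1
          rw [show n - (p - 1) = n - p + 1 from by ring] at IH2
          have o12 : (b (n - p) : ℝ) < (b (n - p + 1) : ℝ) := hbR (by omega)
          have o23 : (b (n - p + 1) : ℝ) < (b n : ℝ) := hbR (by omega)
          have o34 : (b n : ℝ) < (b (n + 1) : ℝ) := hbR (by omega)
          obtain ⟨hfT, hf1, hf3⟩ := hWc (b (n - p)) (h (b (n - p)))
            (b n) (h (b n)) (by linarith)
          obtain ⟨hkT, hk2, hk4⟩ := hWc (b (n - p + 1)) (h (b (n - p + 1)))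
            (b (n + 1)) (h (b (n + 1))) (by linarith)
          obtain ⟨hgT, hg1, hg4⟩ := hWc (b (n - p)) (h (b (n - p)))
            (b (n + 1)) (h (b (n + 1))) (by linarith)
          exact (main_step hconv hfT hkT hgT o12 o23 o34 hf1 hf3 IH1 hk2 hk4 IH2
            hg1 hg4).2
        · -- p = 1 : base case
          have hp1 : p = 1 := by omega
          subst hp1
          exact h52 n
  intro n p q hp hq
  have hm : p + q = ((p + q - 2).toNat : ℤ) + 2 := by omega
  exact key (p + q - 2).toNat n p q hp hq hm
end

section
/- Let W : ℝ → ℝ be continuous, even, strictly convex with W(0)=0. For integers b₀ < b₁ < b₂ < b₃ and heights satisfying h_{b₁} ≥ W(b₀,h_{b₀},b₂,h_{b₂};b₁) and h_{b₂} ≥ W(b₁,h_{b₁},b₃,h_{b₃};b₂), it is impossible that h_{b₂} < W(b₀,h_{b₀},b₃,h_{b₃};b₂). -/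
/-- Cross inequality for strictly convex functions: increments over an interval
of length `d` strictly increase as the interval moves right. -/
lemma necklace_cross (W : ℝ → ℝ) (hconv : StrictConvexOn ℝ Set.univ W)
    (p q d : ℝ) (hpq : p < q) (hd : 0 < d) :
    W (p + d) - W p < W (q + d) - W q := by
  set l : ℝ := d / (q + d - p) with hl
  have hden : 0 < q + d - p := by linarith
  have hl0 : 0 < l := div_pos hd hden
  have hl1 : l < 1 := (div_lt_one hden).2 (by linarith)
  have hkey : l * (q + d - p) = d := div_mul_cancel₀ d (ne_of_gt hden)
  have hne : p ≠ q + d := by linarith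
  have h1 : W (l * p + (1 - l) * (q + d)) < l * W p + (1 - l) * W (q + d) := by
    simpa [smul_eq_mul] using
      hconv.2 (Set.mem_univ p) (Set.mem_univ (q + d)) hne hl0 (by linarith) (by ring)
  have h2 : W ((1 - l) * p + l * (q + d)) < (1 - l) * W p + l * W (q + d) := by
    simpa [smul_eq_mul] using
      hconv.2 (Set.mem_univ p) (Set.mem_univ (q + d)) hne (by linarith) hl0 (by ring)
  have e1 : l * p + (1 - l) * (q + d) = q := by linear_combination -hkey
  have e2 : (1 - l) * p + l * (q + d) = p + d := by linear_combination hkey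
  rw [e1] at h1
  rw [e2] at h2
  linarith

/-- The difference of two translates of a strictly convex function is strictly
monotone (as soon as the shifts are distinct). -/
lemma necklace_diff_strictMono (W : ℝ → ℝ) (hconv : StrictConvexOn ℝ Set.univ W)
    {s t : ℝ} (hst : s < t) : StrictMono (fun x => W (x - s) - W (x - t)) := by
  intro x y hxy
  have h := necklace_cross W hconv (x - t) (x - s) (y - x) (by linarith) (by linarith)
  have e1 : x - t + (y - x) = y - t := by ring
  have e2 : x - s + (y - x) = y - s := by ring
  rw [e1, e2] at h
  simpa using by linarith

/-- With `Wc j a k b : ℝ → ℝ` the unique translate of the strictly convex even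
shape `W` through `(j, a)` and `(k, b)`: if `h₁ ≥ W(b₀,h₀,b₂,h₂;b₁)` and
`h₂ ≥ W(b₁,h₁,b₃,h₃;b₂)`, then `h₂ < W(b₀,h₀,b₃,h₃;b₂)` is impossible. -/
theorem necklace_no_bad_triple
    (W : ℝ → ℝ) (hcont : Continuous W) (heven : ∀ x, W (-x) = W x)
    (hconv : StrictConvexOn ℝ Set.univ W) (hW0 : W 0 = 0)
    (Wc : ℝ → ℝ → ℝ → ℝ → ℝ → ℝ)
    (hWc : ∀ j a k b : ℝ, j < k →
      (∃ xs hs : ℝ, ∀ x, Wc j a k b x = hs + W (x - xs)) ∧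
        Wc j a k b j = a ∧ Wc j a k b k = b)
    (b₀ b₁ b₂ b₃ : ℤ) (hb01 : b₀ < b₁) (hb12 : b₁ < b₂) (hb23 : b₂ < b₃)
    (h₀ h₁ h₂ h₃ : ℝ)
    (hA : Wc (b₀ : ℝ) h₀ (b₂ : ℝ) h₂ (b₁ : ℝ) ≤ h₁)
    (hB : Wc (b₁ : ℝ) h₁ (b₃ : ℝ) h₃ (b₂ : ℝ) ≤ h₂) :
    ¬ h₂ < Wc (b₀ : ℝ) h₀ (b₃ : ℝ) h₃ (b₂ : ℝ) := by
  intro hbad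
  have c01 : (b₀ : ℝ) < b₁ := by exact_mod_cast hb01
  have c12 : (b₁ : ℝ) < b₂ := by exact_mod_cast hb12
  have c23 : (b₂ : ℝ) < b₃ := by exact_mod_cast hb23
  -- the three curves
  obtain ⟨⟨sP, cP, hPdef⟩, hP0, hP2⟩ := hWc (b₀ : ℝ) h₀ (b₂ : ℝ) h₂ (by linarith)
  obtain ⟨⟨sQ, cQ, hQdef⟩, hQ1, hQ3⟩ := hWc (b₁ : ℝ) h₁ (b₃ : ℝ) h₃ (by linarith)
  obtain ⟨⟨sR, cR, hRdef⟩, hR0, hR3⟩ := hWc (b₀ : ℝ) h₀ (b₃ : ℝ) h₃ (by linarith)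
  rw [hPdef] at hP0 hP2 hA
  rw [hQdef] at hQ1 hQ3 hB
  rw [hRdef] at hR0 hR3 hbad
  -- Step 1: (R - P) is 0 at b₀ and > 0 at b₂, hence strictly increasing, so > 0 at b₃.
  have step1 : cP + W ((b₃ : ℝ) - sP) < h₃ := by
    rcases lt_trichotomy sR sP with h | h | h
    · have hm := necklace_diff_strictMono W hconv h
      have h23 := hm (show (b₂ : ℝ) < b₃ from c23)
      simp only at h23
      linarith
    · subst h
      -- difference is constant, contradiction with 0 at b₀ and > 0 at b₂
      linarith
    · have hm := necklace_diff_strictMono W hconv h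
      have h02 := hm (show (b₀ : ℝ) < b₂ from by linarith)
      simp only at h02
      linarith
  -- Step 2: (Q - P) is ≥ 0 at b₁ and ≤ 0 at b₂, hence ≤ 0 at b₃.
  have step2 : h₃ ≤ cP + W ((b₃ : ℝ) - sP) := by
    rcases lt_trichotomy sQ sP with h | h | h
    · have hm := necklace_diff_strictMono W hconv h
      have h12 := hm (show (b₁ : ℝ) < b₂ from c12)
      simp only at h12
      linarith
    · subst h
      linarith
    · have hm := necklace_diff_strictMono W hconv h
      have h23 := hm (show (b₂ : ℝ) < b₃ from c23)
      simp only at h23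
      linarith
  linarith
end
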